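/- (Shifted projection is a bijection) Let C = {(x₁,x₃,x₄) ∈ ℝ³ : (1/2)x₁² − (1/3)x₁³ − (1/2)x₃² = 0} (the loop cylinder) and define P : C → ℝ² by P(x₁,x₃,x₄) = (x₁ − 3/2, x₄) if x₃ ≥ 0 and P(x₁,x₃,x₄) = (3/2 − x₁, x₄) if x₃ < 0. Then P is a bijection from C onto the set {(u,v) ∈ ℝ² : u ≠ 3/2}. -/
import Mathlib


/-- The loop cylinder C = {(x₁,x₃,x₄) : (1/2)x₁² − (1/3)x₁³ − (1/2)x₃² = 0},
    the intersection of the cross section {x₂ = 0} with the zero level set of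
    the first integral H, in coordinates (x₁,x₃,x₄). -/
def loopCylinder : Set (ℝ × ℝ × ℝ) :=
  {x | (1 / 2) * x.1 ^ 2 - (1 / 3) * x.1 ^ 3 - (1 / 2) * x.2.1 ^ 2 = 0}

/-- The shifted projection P(x₁,x₃,x₄) = (x₁ − 3/2, x₄) if x₃ ≥ 0 and
    (3/2 − x₁, x₄) if x₃ < 0. -/
noncomputable def shiftedProj (x : ℝ × ℝ × ℝ) : ℝ × ℝ :=
  if 0 ≤ x.2.1 then (x.1 - 3 / 2, x.2.2) else (3 / 2 - x.1, x.2.2)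

private lemma le_three_halves {a b : ℝ}
    (h : (1 / 2) * a ^ 2 - (1 / 3) * a ^ 3 - (1 / 2) * b ^ 2 = 0) : a ≤ 3 / 2 := by
  by_contra hle
  push_neg at hle
  have h0 : 0 < a := by linarith
  nlinarith [mul_pos (mul_pos h0 h0) (show (0:ℝ) < 2 * a - 3 by linarith), sq_nonneg b]

private lemma lt_three_halves {a b : ℝ}
    (h : (1 / 2) * a ^ 2 - (1 / 3) * a ^ 3 - (1 / 2) * b ^ 2 = 0) (hb : b < 0) :
    a < 3 / 2 := by
  have hb2 : 0 < b ^ 2 := by nlinarith [mul_pos_of_neg_of_neg hb hb]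
  by_contra hle
  push_neg at hle
  have h0 : 0 < a := lt_of_lt_of_le (by norm_num) hle
  nlinarith [mul_nonneg (mul_nonneg h0.le h0.le) (show (0:ℝ) ≤ 2 * a - 3 by linarith)]

/-- (Shifted projection is a bijection) P is a bijection from the loop
    cylinder C onto {(u,v) ∈ ℝ² : u ≠ 3/2}. -/
theorem stmt_15 :
    Set.BijOn shiftedProj loopCylinder {p : ℝ × ℝ | p.1 ≠ 3 / 2} := by
  refine ⟨?_, ?_, ?_⟩
  · -- MapsTo
    rintro ⟨a, b, c⟩ h
    simp only [loopCylinder, Set.mem_setOf_eq] at h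
    simp only [shiftedProj, Set.mem_setOf_eq]
    split_ifs with hb
    · intro he
      have ha : a = 3 := by
        have := congrArg id he
        simpa using by linarith [show a - 3/2 = 3/2 from he]
      nlinarith [sq_nonneg b]
    · intro he
      have ha : a = 0 := by linarith [show 3/2 - a = 3/2 from he]
      push_neg at hb
      nlinarith
  · -- InjOn
    rintro ⟨a, b, c⟩ h ⟨a', b', c'⟩ h' he
    simp only [loopCylinder, Set.mem_setOf_eq] at h h'
    simp only [shiftedProj] at he
    split_ifs at he with hb hb' hb'
    · rw [Prod.mk.injEq] at he
      obtain ⟨h1, h2⟩ := he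
      have ha : a = a' := by linarith
      subst ha
      have hbb : b = b' := by nlinarith
      simp [hbb, h2]
    · -- b ≥ 0, b' < 0 : impossible
      push_neg at hb'
      rw [Prod.mk.injEq] at he
      obtain ⟨h1, _⟩ := he
      have h2 := le_three_halves h
      have h3 := lt_three_halves h' hb'
      exfalso; linarith
    · -- b < 0, b' ≥ 0 : impossible
      push_neg at hb
      rw [Prod.mk.injEq] at he
      obtain ⟨h1, _⟩ := he
      have h2 := lt_three_halves h hb
      have h3 := le_three_halves h'
      exfalso; linarith
    · push_neg at hb hb'
      rw [Prod.mk.injEq] at he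
      obtain ⟨h1, h2⟩ := he
      have ha : a = a' := by linarith
      subst ha
      have hbb : b = b' := by nlinarith
      simp [hbb, h2]
  · -- SurjOn
    rintro ⟨u, v⟩ hu
    simp only [Set.mem_setOf_eq] at hu
    by_cases hle : u ≤ 0
    · set a : ℝ := u + 3 / 2 with ha
      have hr : 0 ≤ a ^ 2 - (2 / 3) * a ^ 3 := by
        nlinarith [mul_nonneg (mul_self_nonneg a) (show (0:ℝ) ≤ 3 - 2 * a by simp [ha]; linarith)]
      refine ⟨(a, Real.sqrt (a ^ 2 - (2 / 3) * a ^ 3), v), ?_, ?_⟩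
      · simp only [loopCylinder, Set.mem_setOf_eq]
        rw [Real.sq_sqrt hr]; ring
      · simp only [shiftedProj, Real.sqrt_nonneg, if_pos]
        simp [ha]
    · push_neg at hle
      obtain ⟨a, ha⟩ : ∃ a : ℝ, a = 3 / 2 - u := ⟨_, rfl⟩
      have hane : a ≠ 0 := by
        intro h0
        apply hu
        have : u = 3 / 2 := by rw [ha] at h0; linarith
        exact this
      have hsq : 0 < a ^ 2 := by positivity
      have h3 : 0 < 3 - 2 * a := by rw [ha]; linarith
      have hr : 0 < a ^ 2 - (2 / 3) * a ^ 3 := by nlinarith [mul_pos hsq h3]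
      have hsp : 0 < Real.sqrt (a ^ 2 - (2 / 3) * a ^ 3) := Real.sqrt_pos.mpr hr
      refine ⟨(a, -Real.sqrt (a ^ 2 - (2 / 3) * a ^ 3), v), ?_, ?_⟩
      · simp only [loopCylinder, Set.mem_setOf_eq]
        rw [neg_sq, Real.sq_sqrt hr.le]; ring
      · have : ¬ (0 ≤ -Real.sqrt (a ^ 2 - (2 / 3) * a ^ 3)) := by linarith
        simp only [shiftedProj, this, if_neg, not_false_iff]
        simp [ha]
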